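/- For a block diagonal Hermitian matrix A = diag{A_1,...,A_N} ∈ C^{NM×NM} with each A_k ∈ C^{M×M} Hermitian, the induced block maximum norm of A equals its spectral radius: ‖A‖_{b,∞} = ρ(A). -/

import Mathlib

/-!
Write `A = diag{A_1, …, A_N}` and `x_k` for the `k`-th block of `x`. Since `(A x)_k = A_k x_k`,
both the block maximum norm and the Euclidean (`ℓ²`) operator norm of `A` are characterised by the
same condition: `‖A‖ ≤ c` iff `‖A_k v‖ ≤ c ‖v‖` for every block `k` and every `v ∈ ℂ^M`. For the
operator norm this is because `‖A x‖² = ∑ₖ ‖A_k x_k‖²`; for the block norm one tests on vectors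
supported on a single block. Hence the two norms agree, and for the Hermitian matrix `A` the
`ℓ²` operator norm is the spectral radius, as in any C⋆-algebra.
-/

open Matrix

/-- The block maximum norm of a block vector `x = col{x_1,...,x_N}` with `x_k ∈ ℂ^M`. -/
noncomputable def blockNorm (N M : ℕ) (x : Fin N × Fin M → ℂ) : ℝ :=
  ⨆ k : Fin N, Real.sqrt (∑ j : Fin M, ‖x (k, j)‖ ^ 2)

/-- The matrix norm induced by the block maximum norm. -/
noncomputable def inducedBlockNorm (N M : ℕ)
    (A : Matrix (Fin N × Fin M) (Fin N × Fin M) ℂ) : ℝ :=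
  sSup {r : ℝ | ∃ x : Fin N × Fin M → ℂ, x ≠ 0 ∧
    r = blockNorm N M (A.mulVec x) / blockNorm N M x}

open WithLp Function
open scoped Matrix.Norms.L2Operator

section L2

variable {𝕜 ι κ : Type*} [RCLike 𝕜] [Fintype ι] [Fintype κ]

lemma EuclideanSpace.norm_toLp_sq_eq_sum_curry (x : ι × κ → 𝕜) :
    ‖toLp 2 x‖ ^ 2 = ∑ k, ‖toLp 2 (curry x k)‖ ^ 2 := by
  simp only [EuclideanSpace.norm_sq_eq, Fintype.sum_prod_type]
  rfl

lemma EuclideanSpace.norm_toLp_uncurry_single [DecidableEq ι] (k : ι) (v : κ → 𝕜) :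
    ‖toLp 2 (uncurry (Pi.single k v))‖ = ‖toLp 2 v‖ := by
  rw [← sq_eq_sq₀ (norm_nonneg _) (norm_nonneg _), norm_toLp_sq_eq_sum_curry, curry_uncurry]
  simp_rw [Pi.apply_single (M := fun _ => κ → 𝕜) (fun _ w => ‖toLp 2 w‖ ^ 2) (fun _ => by simp)
    k v]
  exact Fintype.sum_pi_single' k _

lemma Matrix.l2_opNorm_le_iff [DecidableEq κ] (A : Matrix κ κ 𝕜) {c : ℝ} (hc : 0 ≤ c) :
    ‖A‖ ≤ c ↔ ∀ v, ‖toLp 2 (A *ᵥ v)‖ ≤ c * ‖toLp 2 v‖ := by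
  rw [cstar_norm_def, ContinuousLinearMap.opNorm_le_iff hc]
  exact ⟨fun h v => h (toLp 2 v), fun h y => h (ofLp y)⟩

end L2

section BlockDiag

variable {𝕜 ι κ : Type*} [RCLike 𝕜] [DecidableEq ι]

/-- Unlike `Matrix.blockDiagonal`, the block index is the first component of the row and column
indices, as in the block vectors `col{x_1, …, x_N}`. -/
def Matrix.blockDiagonalFst (Ab : ι → Matrix κ κ 𝕜) : Matrix (ι × κ) (ι × κ) 𝕜 :=
  Matrix.of fun p q => if p.1 = q.1 then Ab p.1 p.2 q.2 else 0

lemma Matrix.blockDiagonalFst_eq_submatrix_blockDiagonal (Ab : ι → Matrix κ κ 𝕜) :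
    blockDiagonalFst Ab = (blockDiagonal Ab).submatrix Prod.swap Prod.swap := by
  ext p q
  simp [blockDiagonalFst, blockDiagonal_apply]

lemma Matrix.isHermitian_blockDiagonalFst {Ab : ι → Matrix κ κ 𝕜}
    (hAb : ∀ k, (Ab k).IsHermitian) : (blockDiagonalFst Ab).IsHermitian := by
  rw [blockDiagonalFst_eq_submatrix_blockDiagonal]
  exact (isHermitian_blockDiagonal_iff.2 hAb).submatrix _

variable [Fintype ι] [Fintype κ] (Ab : ι → Matrix κ κ 𝕜)

lemma Matrix.curry_blockDiagonalFst_mulVec (x : ι × κ → 𝕜) (k : ι) :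
    curry (blockDiagonalFst Ab *ᵥ x) k = Ab k *ᵥ curry x k := by
  ext j
  simp [blockDiagonalFst, mulVec, dotProduct, Fintype.sum_prod_type]

lemma Matrix.blockDiagonalFst_mulVec_uncurry_single (k : ι) (v : κ → 𝕜) :
    blockDiagonalFst Ab *ᵥ uncurry (Pi.single k v) = uncurry (Pi.single k (Ab k *ᵥ v)) := by
  ext ⟨l, j⟩
  have := curry_blockDiagonalFst_mulVec Ab (uncurry (Pi.single k v)) l
  rw [curry_uncurry,
    Pi.apply_single (M := fun _ => κ → 𝕜) (fun l w => Ab l *ᵥ w) (fun _ => mulVec_zero _)] at this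
  exact congrFun this j

variable [DecidableEq κ]

lemma Matrix.norm_mulVec_le_l2_opNorm_blockDiagonalFst_mul (k : ι) (v : κ → 𝕜) :
    ‖toLp 2 (Ab k *ᵥ v)‖ ≤ ‖blockDiagonalFst Ab‖ * ‖toLp 2 v‖ := by
  rw [← EuclideanSpace.norm_toLp_uncurry_single k, ← blockDiagonalFst_mulVec_uncurry_single,
    ← EuclideanSpace.norm_toLp_uncurry_single k v]
  exact (l2_opNorm_le_iff _ (norm_nonneg _)).1 le_rfl _

lemma Matrix.l2_opNorm_blockDiagonalFst_le_iff {c : ℝ} (hc : 0 ≤ c) :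
    ‖blockDiagonalFst Ab‖ ≤ c ↔ ∀ k, ‖Ab k‖ ≤ c := by
  simp_rw [l2_opNorm_le_iff _ hc]
  refine ⟨fun h k v => (norm_mulVec_le_l2_opNorm_blockDiagonalFst_mul Ab k v).trans ?_,
    fun h x => ?_⟩
  · gcongr
    exact (l2_opNorm_le_iff _ hc).2 h
  · rw [← sq_le_sq₀ (norm_nonneg _) (by positivity), mul_pow,
      EuclideanSpace.norm_toLp_sq_eq_sum_curry, EuclideanSpace.norm_toLp_sq_eq_sum_curry,
      Finset.mul_sum]
    gcongr with k
    rw [curry_blockDiagonalFst_mulVec, ← mul_pow]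
    gcongr
    exact h k _

end BlockDiag

section BlockNorm

variable {N M : ℕ}

lemma blockNorm_eq_iSup_norm (x : Fin N × Fin M → ℂ) :
    blockNorm N M x = ⨆ k, ‖toLp 2 (curry x k)‖ := by
  simp [blockNorm, EuclideanSpace.norm_eq]

lemma blockNorm_nonneg (x : Fin N × Fin M → ℂ) : 0 ≤ blockNorm N M x :=
  Real.iSup_nonneg fun _ => Real.sqrt_nonneg _

lemma norm_curry_le_blockNorm (x : Fin N × Fin M → ℂ) (k : Fin N) :
    ‖toLp 2 (curry x k)‖ ≤ blockNorm N M x := by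
  rw [blockNorm_eq_iSup_norm]
  exact le_ciSup (Set.finite_range fun k => ‖toLp 2 (curry x k)‖).bddAbove k

lemma blockNorm_pos {x : Fin N × Fin M → ℂ} (hx : x ≠ 0) : 0 < blockNorm N M x := by
  obtain ⟨⟨k, j⟩, hkj⟩ := Function.ne_iff.mp hx
  have hk : toLp 2 (curry x k) ≠ 0 := fun h => hkj (congrFun (congrArg ofLp h) j)
  exact (norm_pos_iff.2 hk).trans_le (norm_curry_le_blockNorm x k)

lemma blockNorm_uncurry_single (k : Fin N) (v : Fin M → ℂ) :
    blockNorm N M (uncurry (Pi.single k v)) = ‖toLp 2 v‖ := by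
  refine le_antisymm ?_ ?_
  · rw [blockNorm_eq_iSup_norm]
    refine Real.iSup_le (fun l => ?_) (norm_nonneg _)
    rcases eq_or_ne l k with rfl | hl
    · simp
    · simp [hl]
  · simpa using norm_curry_le_blockNorm (uncurry (Pi.single k v)) k

end BlockNorm

section InducedBlockNorm

variable {N M : ℕ} (A : Matrix (Fin N × Fin M) (Fin N × Fin M) ℂ)

lemma inducedBlockNorm_nonneg : 0 ≤ inducedBlockNorm N M A :=
  Real.sSup_nonneg <| by
    rintro _ ⟨x, -, rfl⟩
    exact div_nonneg (blockNorm_nonneg _) (blockNorm_nonneg _)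

/-- The bound `C` is needed because `sSup` of a set of reals that is not bounded above is `0`. -/
lemma inducedBlockNorm_le_iff {C : ℝ} (hC : ∀ x, blockNorm N M (A *ᵥ x) ≤ C * blockNorm N M x)
    {c : ℝ} (hc : 0 ≤ c) :
    inducedBlockNorm N M A ≤ c ↔ ∀ x, blockNorm N M (A *ᵥ x) ≤ c * blockNorm N M x := by
  refine ⟨fun h x => ?_, fun h => Real.sSup_le ?_ hc⟩
  · rcases eq_or_ne x 0 with rfl | hx
    · simp [blockNorm]
    have hbdd : BddAbove {r : ℝ | ∃ x : Fin N × Fin M → ℂ, x ≠ 0 ∧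
        r = blockNorm N M (A *ᵥ x) / blockNorm N M x} := by
      refine ⟨C, ?_⟩
      rintro _ ⟨y, hy, rfl⟩
      exact (div_le_iff₀ (blockNorm_pos hy)).2 (hC y)
    rw [← div_le_iff₀ (blockNorm_pos hx)]
    exact (le_csSup hbdd ⟨x, hx, rfl⟩).trans h
  · rintro _ ⟨x, hx, rfl⟩
    exact (div_le_iff₀ (blockNorm_pos hx)).2 (h x)

end InducedBlockNorm

lemma blockNorm_blockDiagonalFst_mulVec_le_iff {N M : ℕ} (Ab : Fin N → Matrix (Fin M) (Fin M) ℂ)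
    {c : ℝ} (hc : 0 ≤ c) :
    (∀ x, blockNorm N M (blockDiagonalFst Ab *ᵥ x) ≤ c * blockNorm N M x) ↔
      ∀ k, ‖Ab k‖ ≤ c := by
  simp_rw [l2_opNorm_le_iff _ hc]
  refine ⟨fun h k v => ?_, fun h x => ?_⟩
  · simpa [blockDiagonalFst_mulVec_uncurry_single, blockNorm_uncurry_single] using
      h (uncurry (Pi.single k v))
  · rw [blockNorm_eq_iSup_norm]
    refine Real.iSup_le (fun k => ?_) (mul_nonneg hc (blockNorm_nonneg x))
    rw [curry_blockDiagonalFst_mulVec]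
    exact (h k _).trans (by gcongr; exact norm_curry_le_blockNorm x k)

lemma inducedBlockNorm_blockDiagonalFst {N M : ℕ} (Ab : Fin N → Matrix (Fin M) (Fin M) ℂ) :
    inducedBlockNorm N M (blockDiagonalFst Ab) = ‖blockDiagonalFst Ab‖ := by
  have hbdd := (blockNorm_blockDiagonalFst_mulVec_le_iff Ab (norm_nonneg _)).2
    ((l2_opNorm_blockDiagonalFst_le_iff Ab (norm_nonneg _)).1 le_rfl)
  have h_le_iff {c : ℝ} (hc : 0 ≤ c) :
      inducedBlockNorm N M (blockDiagonalFst Ab) ≤ c ↔ ‖blockDiagonalFst Ab‖ ≤ c := by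
    rw [inducedBlockNorm_le_iff _ hbdd hc, blockNorm_blockDiagonalFst_mulVec_le_iff Ab hc,
      l2_opNorm_blockDiagonalFst_le_iff Ab hc]
  exact le_antisymm ((h_le_iff (norm_nonneg _)).2 le_rfl)
    ((h_le_iff (inducedBlockNorm_nonneg _)).1 le_rfl)

theorem inducedBlockNorm_blockDiagonal_hermitian_eq_spectralRadius_general
    {N M : ℕ}
    (Ab : Fin N → Matrix (Fin M) (Fin M) ℂ)
    (hAb : ∀ k, (Ab k).IsHermitian) :
    inducedBlockNorm N M (Matrix.of fun p q => if p.1 = q.1 then Ab p.1 p.2 q.2 else 0) =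
      (spectralRadius ℂ
        ((Matrix.of fun p q => if p.1 = q.1 then Ab p.1 p.2 q.2 else 0) :
          Matrix (Fin N × Fin M) (Fin N × Fin M) ℂ)).toReal := by
  change inducedBlockNorm N M (blockDiagonalFst Ab) =
    (spectralRadius ℂ (blockDiagonalFst Ab)).toReal
  have hA : IsSelfAdjoint (blockDiagonalFst Ab) := isHermitian_blockDiagonalFst hAb
  rw [inducedBlockNorm_blockDiagonalFst, hA.spectralRadius_eq_nnnorm]
  rfl

/-- For a block diagonal Hermitian matrix `A = diag{A_1,...,A_N}` with each `A_k ∈ ℂ^{M×M}`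
Hermitian, the induced block maximum norm of `A` equals its spectral radius. -/
theorem inducedBlockNorm_blockDiagonal_hermitian_eq_spectralRadius
    {N M : ℕ} (hN : 0 < N) (hM : 0 < M)
    (Ab : Fin N → Matrix (Fin M) (Fin M) ℂ)
    (hAb : ∀ k, (Ab k).IsHermitian) :
    inducedBlockNorm N M (Matrix.of fun p q => if p.1 = q.1 then Ab p.1 p.2 q.2 else 0) =
      (spectralRadius ℂ
        ((Matrix.of fun p q => if p.1 = q.1 then Ab p.1 p.2 q.2 else 0) :
          Matrix (Fin N × Fin M) (Fin N × Fin M) ℂ)).toReal :=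
  inducedBlockNorm_blockDiagonal_hermitian_eq_spectralRadius_general Ab hAb
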